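/- For every joint probability distribution P on X_1 × X_2 with marginals P_1, P_2, the conditional mutual information satisfies I_P(X_2;Y_1|X_1) ≤ (P_1(0) − P(0,0))·C_{2,0} + (1 − P_1(0) − P_2(0) + P(0,0))·C_{2,1}. -/

import Mathlib

/-!
For a fixed `x₁`, the inner sum of `I_P(X₂;Y₁|X₁)` is the mutual information of the channel
`x₂ ↦ W₁(·|x₁,x₂)` with input weights `P(x₁,·)`: the output entropy, at most
`P₁(x₁) log s₁` by concavity of `-t log t`, minus the weighted row entropies. The row `x₂ = 0`
is uniform, with entropy `log s₁`, and every other row is a permutation of the row `x₂ = 1`,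
so the bound is `(P₁(x₁) - P(x₁,0)) C_{2,x₁}`. Summing over `x₁`, the symmetry property
replaces every `C_{2,x₁}` with `x₁ ≠ 0` by `C_{2,1}`.
-/

open Real BigOperators Finset

/-- Entropy of a finite probability vector, with the convention `0 * log 0 = 0`
(automatic since `Real.log 0 = 0`). -/
noncomputable def ent {n : ℕ} (p : Fin n → ℝ) : ℝ := -∑ y, p y * Real.log (p y)

/-- `Q` is a probability distribution on `Fin n`. -/
def IsProbDist {n : ℕ} (Q : Fin n → ℝ) : Prop := (∀ x, 0 ≤ Q x) ∧ ∑ x, Q x = 1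

/-- `P` is a joint probability distribution. -/
def IsJointProbDist {m n : ℕ} (P : Fin m → Fin n → ℝ) : Prop :=
  (∀ x1 x2, 0 ≤ P x1 x2) ∧ ∑ x1, ∑ x2, P x1 x2 = 1

/-- First marginal `P_1`. -/
noncomputable def marg1 {m n : ℕ} (P : Fin m → Fin n → ℝ) (x1 : Fin m) : ℝ := ∑ x2, P x1 x2

/-- Second marginal `P_2`. -/
noncomputable def marg2 {m n : ℕ} (P : Fin m → Fin n → ℝ) (x2 : Fin n) : ℝ := ∑ x1, P x1 x2

/-- Conditional mutual information `I_P(X₁;Y₂|X₂)`; terms with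
`P x1 x2 * W2 x1 x2 y2 = 0` vanish, and summands with `marg2 P x2 = 0` vanish
since then `P x1 x2 = 0`. -/
noncomputable def condMI1 {m n t : ℕ} (P : Fin m → Fin n → ℝ)
    (W2 : Fin m → Fin n → Fin t → ℝ) : ℝ :=
  ∑ x2, ∑ x1, ∑ y2, P x1 x2 * W2 x1 x2 y2 *
    Real.log (W2 x1 x2 y2 / ((∑ x1', P x1' x2 * W2 x1' x2 y2) / marg2 P x2))

/-- Conditional mutual information `I_P(X₂;Y₁|X₁)`. -/
noncomputable def condMI2 {m n t : ℕ} (P : Fin m → Fin n → ℝ)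
    (W1 : Fin m → Fin n → Fin t → ℝ) : ℝ :=
  ∑ x1, ∑ x2, ∑ y1, P x1 x2 * W1 x1 x2 y1 *
    Real.log (W1 x1 x2 y1 / ((∑ x2', P x1 x2' * W1 x1 x2' y1) / marg1 P x1))

/-- Structural assumptions of a generalized push-to-talk two-way channel with
input alphabets `Fin (r1+3)`, `Fin (r2+3)` and output alphabets `Fin (s1+2)`,
`Fin (s2+2)`: both marginal channels are transition matrices; the row of
input `0` of each user is uniform; for each state, the nonzero-input rows are
permutations of the row of input `1` and have constant column sums
(weak symmetry). -/
def GenPTT {r1 r2 s1 s2 : ℕ} (W1 : Fin (r1 + 3) → Fin (r2 + 3) → Fin (s1 + 2) → ℝ)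
    (W2 : Fin (r1 + 3) → Fin (r2 + 3) → Fin (s2 + 2) → ℝ) : Prop :=
  (∀ x1 x2 y1, 0 ≤ W1 x1 x2 y1) ∧ (∀ x1 x2 y2, 0 ≤ W2 x1 x2 y2) ∧
  (∀ x1 x2, ∑ y1, W1 x1 x2 y1 = 1) ∧ (∀ x1 x2, ∑ y2, W2 x1 x2 y2 = 1) ∧
  (∀ x2 y2, W2 0 x2 y2 = 1 / ((s2 : ℝ) + 2)) ∧
  (∀ x2, ∀ x1 : Fin (r1 + 3), x1 ≠ 0 →
    ∃ σ : Equiv.Perm (Fin (s2 + 2)), ∀ y2, W2 x1 x2 y2 = W2 1 x2 (σ y2)) ∧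
  (∀ x2, ∀ y2 y2' : Fin (s2 + 2),
    ∑ x1 ∈ Finset.univ.filter (fun x1 => x1 ≠ (0 : Fin (r1 + 3))), W2 x1 x2 y2 =
    ∑ x1 ∈ Finset.univ.filter (fun x1 => x1 ≠ (0 : Fin (r1 + 3))), W2 x1 x2 y2') ∧
  (∀ x1 y1, W1 x1 0 y1 = 1 / ((s1 : ℝ) + 2)) ∧
  (∀ x1, ∀ x2 : Fin (r2 + 3), x2 ≠ 0 →
    ∃ σ : Equiv.Perm (Fin (s1 + 2)), ∀ y1, W1 x1 x2 y1 = W1 x1 1 (σ y1)) ∧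
  (∀ x1, ∀ y1 y1' : Fin (s1 + 2),
    ∑ x2 ∈ Finset.univ.filter (fun x2 => x2 ≠ (0 : Fin (r2 + 3))), W1 x1 x2 y1 =
    ∑ x2 ∈ Finset.univ.filter (fun x2 => x2 ≠ (0 : Fin (r2 + 3))), W1 x1 x2 y1')

/-- `C_{1,x₂} = log s₂ − H(row of input 1 of Q_{1,x₂})`. -/
noncomputable def C1 {r1 r2 s2 : ℕ} (W2 : Fin (r1 + 3) → Fin (r2 + 3) → Fin (s2 + 2) → ℝ)
    (x2 : Fin (r2 + 3)) : ℝ := Real.log ((s2 : ℝ) + 2) - ent (fun y2 => W2 1 x2 y2)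

/-- `C_{2,x₁} = log s₁ − H(row of input 1 of Q_{2,x₁})`. -/
noncomputable def C2 {r1 r2 s1 : ℕ} (W1 : Fin (r1 + 3) → Fin (r2 + 3) → Fin (s1 + 2) → ℝ)
    (x1 : Fin (r1 + 3)) : ℝ := Real.log ((s1 : ℝ) + 2) - ent (fun y1 => W1 x1 1 y1)

/-- The channel symmetry property: `C_{1,x₂} = C_{1,1}` for all `x₂ ≠ 0` and
`C_{2,x₁} = C_{2,1}` for all `x₁ ≠ 0`. -/
def SymProp {r1 r2 s1 s2 : ℕ} (W1 : Fin (r1 + 3) → Fin (r2 + 3) → Fin (s1 + 2) → ℝ)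
    (W2 : Fin (r1 + 3) → Fin (r2 + 3) → Fin (s2 + 2) → ℝ) : Prop :=
  (∀ x2 : Fin (r2 + 3), x2 ≠ 0 → C1 W2 x2 = C1 W2 1) ∧
  (∀ x1 : Fin (r1 + 3), x1 ≠ 0 → C2 W1 x1 = C2 W1 1)

namespace Real

theorem sum_negMulLog_le {ι : Type*} [Fintype ι] [Nonempty ι] {q : ι → ℝ}
    (hq : ∀ i, 0 ≤ q i) :
    ∑ i, negMulLog (q i) ≤ (∑ i, q i) * log (Fintype.card ι) + negMulLog (∑ i, q i) := by
  set n : ℝ := (Fintype.card ι : ℝ)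
  have hn : 0 < n := by positivity
  have jensen := concaveOn_negMulLog.le_map_sum (t := Finset.univ) (w := fun _ => n⁻¹) (p := q)
    (fun _ _ => by positivity) (by simp [n, Finset.card_univ]) (fun i _ => hq i)
  simp only [smul_eq_mul, ← Finset.mul_sum] at jensen
  rw [mul_comm, negMulLog_mul, negMulLog, log_inv] at jensen
  have := mul_le_mul_of_nonneg_left jensen hn.le
  field_simp at this
  linarith

end Real

section MutualInfo

variable {α β : Type*} [Fintype α] [Fintype β]

/-- The input weights `a` need not sum to one: they are normalized by `∑ x, a x`. -/
noncomputable def mutualInfo (a : α → ℝ) (W : α → β → ℝ) : ℝ :=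
  ∑ x, ∑ y, a x * W x y * log (W x y / ((∑ x', a x' * W x' y) / ∑ x', a x'))

variable {a : α → ℝ} {W : α → β → ℝ}

theorem mutualInfo_eq (ha : ∀ x, 0 ≤ a x) (hW : ∀ x y, 0 ≤ W x y)
    (hWsum : ∀ x, ∑ y, W x y = 1) :
    mutualInfo a W = ∑ y, negMulLog (∑ x, a x * W x y) - negMulLog (∑ x, a x) -
      ∑ x, a x * ∑ y, negMulLog (W x y) := by
  have split : ∀ x y, a x * W x y * log (W x y / ((∑ x', a x' * W x' y) / ∑ x', a x')) =
      a x * W x y * log (W x y) - a x * W x y * log (∑ x', a x' * W x' y) +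
        a x * W x y * log (∑ x', a x') := by
    intro x y
    rcases (mul_nonneg (ha x) (hW x y)).eq_or_lt with h | h
    · simp [← h]
    have hq : 0 < ∑ x', a x' * W x' y :=
      h.trans_le (Finset.single_le_sum (fun x' _ => mul_nonneg (ha x') (hW x' y))
        (Finset.mem_univ x))
    have hA : 0 < ∑ x', a x' :=
      (pos_of_mul_pos_left h (hW x y)).trans_le
        (Finset.single_le_sum (fun x' _ => ha x') (Finset.mem_univ x))
    rw [log_div (pos_of_mul_pos_right h (ha x)).ne' (div_pos hq hA).ne', log_div hq.ne' hA.ne']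
    ring
  have output : ∑ x, ∑ y, a x * W x y * log (∑ x', a x' * W x' y) =
      ∑ y, (∑ x, a x * W x y) * log (∑ x, a x * W x y) := by
    rw [Finset.sum_comm]
    simp only [Finset.sum_mul]
  have total : ∑ x, ∑ y, a x * W x y * log (∑ x', a x') = (∑ x, a x) * log (∑ x, a x) := by
    simp only [mul_assoc, ← Finset.mul_sum, ← Finset.sum_mul, hWsum, one_mul]
  simp only [mutualInfo, split, Finset.sum_add_distrib, Finset.sum_sub_distrib, output, total,
    negMulLog, Finset.mul_sum]
  simp only [neg_mul, Finset.sum_neg_distrib, mul_neg, sub_neg_eq_add]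
  ring_nf

theorem mutualInfo_le [Nonempty β] (ha : ∀ x, 0 ≤ a x) (hW : ∀ x y, 0 ≤ W x y)
    (hWsum : ∀ x, ∑ y, W x y = 1) :
    mutualInfo a W ≤ (∑ x, a x) * log (Fintype.card β) - ∑ x, a x * ∑ y, negMulLog (W x y) := by
  have outputSum : ∑ y, ∑ x, a x * W x y = ∑ x, a x := by
    rw [Finset.sum_comm]
    simp only [← Finset.mul_sum, hWsum, mul_one]
  have jensen := sum_negMulLog_le (q := fun y => ∑ x, a x * W x y)
    fun y => Finset.sum_nonneg fun x _ => mul_nonneg (ha x) (hW x y)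
  rw [outputSum] at jensen
  rw [mutualInfo_eq ha hW hWsum]
  linarith

end MutualInfo

theorem mutualInfo_le_of_uniform_of_perm {α β : Type*} [Fintype α] [DecidableEq α] [Fintype β]
    [Nonempty β] {a : α → ℝ} {W : α → β → ℝ} (ha : ∀ x, 0 ≤ a x) (hW : ∀ x y, 0 ≤ W x y)
    (hWsum : ∀ x, ∑ y, W x y = 1) {x₀ x₁ : α} (hU : ∀ y, W x₀ y = 1 / Fintype.card β)
    (hperm : ∀ x ≠ x₀, ∃ σ : Equiv.Perm β, ∀ y, W x y = W x₁ (σ y)) :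
    mutualInfo a W ≤
      (∑ x, a x - a x₀) * (log (Fintype.card β) - ∑ y, negMulLog (W x₁ y)) := by
  have uniform : ∑ y, negMulLog (W x₀ y) = log (Fintype.card β) := by
    simp only [hU, Finset.sum_const, Finset.card_univ, nsmul_eq_mul, negMulLog, one_div,
      log_inv]
    field_simp
  have rowEntropy : ∀ x ∈ Finset.univ.erase x₀,
      a x * ∑ y, negMulLog (W x y) = a x * ∑ y, negMulLog (W x₁ y) := by
    intro x hx
    obtain ⟨σ, hσ⟩ := hperm x (Finset.ne_of_mem_erase hx)
    simp only [hσ, Equiv.sum_comp σ (fun y => negMulLog (W x₁ y))]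
  have averageEntropy : ∑ x, a x * ∑ y, negMulLog (W x y) =
      a x₀ * log (Fintype.card β) + (∑ x, a x - a x₀) * ∑ y, negMulLog (W x₁ y) := by
    rw [← Finset.add_sum_erase _ _ (Finset.mem_univ x₀), uniform, Finset.sum_congr rfl rowEntropy,
      ← Finset.sum_mul, Finset.sum_erase_eq_sub (Finset.mem_univ x₀)]
  have := mutualInfo_le ha hW hWsum
  rw [averageEntropy] at this
  linarith

theorem ent_eq_sum_negMulLog {n : ℕ} (p : Fin n → ℝ) : ent p = ∑ y, negMulLog (p y) := by
  simp [ent, negMulLog]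

/-- Upper bound on `I_P(X₂;Y₁|X₁)` via the symmetry property. -/
theorem stmt10 (r1 r2 s1 s2 : ℕ)
    (W1 : Fin (r1 + 3) → Fin (r2 + 3) → Fin (s1 + 2) → ℝ)
    (W2 : Fin (r1 + 3) → Fin (r2 + 3) → Fin (s2 + 2) → ℝ)
    (hW : GenPTT W1 W2) (hSym : SymProp W1 W2)
    (P : Fin (r1 + 3) → Fin (r2 + 3) → ℝ) (hP : IsJointProbDist P) :
    condMI2 P W1 ≤ (marg1 P 0 - P 0 0) * C2 W1 0 +
      (1 - marg1 P 0 - marg2 P 0 + P 0 0) * C2 W1 1 := by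
  obtain ⟨hW1, -, hW1sum, -, -, -, -, hU1, hperm1, -⟩ := hW
  have perUser : ∀ x1, mutualInfo (P x1) (W1 x1) ≤ (marg1 P x1 - P x1 0) * C2 W1 x1 := by
    intro x1
    have := mutualInfo_le_of_uniform_of_perm (hP.1 x1) (hW1 x1) (hW1sum x1) (x₀ := 0) (x₁ := 1)
      (by simpa using hU1 x1) (hperm1 x1)
    simpa [C2, marg1, ent_eq_sum_negMulLog] using this
  have massOffZero : ∑ x1 ∈ Finset.univ.erase 0, (marg1 P x1 - P x1 0) =
      1 - marg1 P 0 - marg2 P 0 + P 0 0 := by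
    rw [Finset.sum_erase_eq_sub (Finset.mem_univ 0), Finset.sum_sub_distrib]
    simp only [marg1, marg2, hP.2]
    ring
  calc condMI2 P W1 = ∑ x1, mutualInfo (P x1) (W1 x1) := rfl
    _ ≤ ∑ x1, (marg1 P x1 - P x1 0) * C2 W1 x1 := Finset.sum_le_sum fun x1 _ => perUser x1
    _ = (marg1 P 0 - P 0 0) * C2 W1 0 + (1 - marg1 P 0 - marg2 P 0 + P 0 0) * C2 W1 1 := by
      rw [← Finset.add_sum_erase _ _ (Finset.mem_univ 0), ← massOffZero, Finset.sum_mul]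
      congr 1
      exact Finset.sum_congr rfl fun x1 hx1 => by rw [hSym.2 x1 (Finset.ne_of_mem_erase hx1)]
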